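/- Let F(x) = (1/2)e^x for x < 0 and F(x) = 1 - (1/2)e^{-x} for x ≥ 0 (the standard Laplace CDF). Then for all real a, b: F(a)/F(b) ≤ e^{|a-b|} and (1-F(a))/(1-F(b)) ≤ e^{|a-b|}. -/
import Mathlib


/-- The CDF of the standard Laplace distribution. -/
noncomputable def laplaceCDF (x : ℝ) : ℝ :=
  if x < 0 then (1 / 2) * Real.exp x else 1 - (1 / 2) * Real.exp (-x)

lemma laplaceCDF_pos (x : ℝ) : 0 < laplaceCDF x := by
  unfold laplaceCDF
  split_ifs with h
  · positivity
  · have : Real.exp (-x) ≤ 1 := Real.exp_le_one_iff.mpr (by linarith [not_lt.mp h])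
    linarith

lemma laplaceCDF_symm (x : ℝ) : 1 - laplaceCDF x = laplaceCDF (-x) := by
  unfold laplaceCDF
  rcases lt_trichotomy x 0 with h | h | h
  · rw [if_pos h, if_neg (by linarith), neg_neg]
  · simp [h]; norm_num
  · rw [if_neg (by linarith), if_pos (by linarith)]; ring

lemma laplaceCDF_mono {a b : ℝ} (h : a ≤ b) : laplaceCDF a ≤ laplaceCDF b := by
  unfold laplaceCDF
  have e1 := Real.exp_le_exp.mpr h
  have e2 := Real.exp_le_exp.mpr (neg_le_neg h)
  split_ifs with h1 h2 h2
  · linarith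
  · have : Real.exp a ≤ 1 := Real.exp_le_one_iff.mpr h1.le
    have : Real.exp (-b) ≤ 1 := Real.exp_le_one_iff.mpr (by linarith [not_lt.mp h2])
    linarith
  · linarith [not_lt.mp h1]
  · linarith

lemma laplaceCDF_key {a b : ℝ} (h : b ≤ a) :
    laplaceCDF a ≤ Real.exp (a - b) * laplaceCDF b := by
  unfold laplaceCDF
  have hab : Real.exp (a - b) = Real.exp a / Real.exp b := Real.exp_sub a b
  split_ifs with h1 h2 h2
  · have heq : Real.exp (a - b) * Real.exp b = Real.exp a := by
      rw [← Real.exp_add]; ring_nf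
    nlinarith [heq]
  · linarith [not_lt.mp h2]
  · -- a ≥ 0, b < 0 : need 1 - ½e^{-a} ≤ e^{a-b} * ½ e^b = ½ e^a
    have ha : 0 ≤ a := not_lt.mp h1
    have hea : 1 ≤ Real.exp a := Real.one_le_exp ha
    have hprod : Real.exp a * Real.exp (-a) = 1 := by
      rw [← Real.exp_add]; simp
    have heq : Real.exp (a - b) * Real.exp b = Real.exp a := by
      rw [← Real.exp_add]; ring_nf
    have : Real.exp (a - b) * ((1:ℝ)/2 * Real.exp b) = 1/2 * Real.exp a := by
      nlinarith [heq]
    rw [this]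
    nlinarith [Real.exp_pos (-a)]
  · -- a ≥ 0, b ≥ 0
    have ha : 0 ≤ a := not_lt.mp h1
    have hb : 0 ≤ b := not_lt.mp h2
    have hu : Real.exp (-a) ≤ Real.exp (-b) := Real.exp_le_exp.mpr (by linarith)
    have hv : Real.exp (-b) ≤ 1 := Real.exp_le_one_iff.mpr (by linarith)
    have h1e : 1 ≤ Real.exp (a - b) := Real.one_le_exp (by linarith)
    have hpa : Real.exp (a - b) * Real.exp (-a) = Real.exp (-b) := by
      rw [← Real.exp_add]; ring_nf
    nlinarith [Real.exp_pos (-a), Real.exp_pos (-b)]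

lemma laplaceCDF_main (a b : ℝ) :
    laplaceCDF a / laplaceCDF b ≤ Real.exp |a - b| := by
  rw [div_le_iff₀ (laplaceCDF_pos b)]
  rcases le_total b a with h | h
  · rw [abs_of_nonneg (by linarith)]
    calc laplaceCDF a ≤ Real.exp (a - b) * laplaceCDF b := laplaceCDF_key h
    _ = Real.exp (a - b) * laplaceCDF b := rfl
  · calc laplaceCDF a ≤ laplaceCDF b := laplaceCDF_mono h
      _ = 1 * laplaceCDF b := (one_mul _).symm
      _ ≤ Real.exp |a - b| * laplaceCDF b := by
          gcongr
          · exact (laplaceCDF_pos b).le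
          · exact Real.one_le_exp (abs_nonneg _)

theorem laplaceCDF_ratio_bound (a b : ℝ) :
    laplaceCDF a / laplaceCDF b ≤ Real.exp |a - b| ∧
    (1 - laplaceCDF a) / (1 - laplaceCDF b) ≤ Real.exp |a - b| := by
  refine ⟨laplaceCDF_main a b, ?_⟩
  rw [laplaceCDF_symm, laplaceCDF_symm]
  have : |a - b| = |(-a) - (-b)| := by rw [← abs_neg]; ring_nf
  rw [this]
  exact laplaceCDF_main (-a) (-b)
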